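/- In the same perturbed push-sum setting, if additionally (α_t) is non-increasing with Σ_t α_t² < ∞, then Σ_{t=0}^∞ α_t ‖x_i[t] − x̄[t]‖ < ∞ for every agent i. -/

import Mathlib

/-!
Rescale by the push-sum weights: `w t = y t • x t` obeys `w (t+1) = P • w t + y (t+1) • ε t`.
Its deviation `u t = w t - y t • m t` from the weighted mean (`m t` the mean of `w t`, which `P`
preserves) has zero sum and obeys `u (t+1) = P • u t + ζ t` with `‖ζ t‖₁ = O(α t)`. Since `P ^ k`
has positive entries it contracts zero-sum tuples in `ℓ¹` by some `λ < 1`, so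
`a t = ‖u t‖₁` satisfies `a (t+k) ≤ λ a t + O(α t)`; as `α` is non-increasing,
`α (t+k) a (t+k) ≤ λ α t a t + O(α t ^ 2)`, which forces `∑ α t a t < ∞`. Finally the weights are
bounded below by some `c > 0`, and `‖x t i - x̄ t‖ ≤ 2 a t / c`.
-/

open Matrix Finset

open scoped Matrix.Module

lemma exists_pos_forall_le_of_finite {α : Type*} [Finite α] {f : α → ℝ} (hf : ∀ a, 0 < f a) :
    ∃ c > 0, ∀ a, c ≤ f a := by
  cases isEmpty_or_nonempty α
  · exact ⟨1, one_pos, isEmptyElim⟩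
  · obtain ⟨a₀, h⟩ := Finite.exists_min f
    exact ⟨f a₀, hf a₀, h⟩

section ColStochastic

variable {ι E : Type*} [Fintype ι] [DecidableEq ι] [NormedAddCommGroup E] [NormedSpace ℝ E]

lemma sum_matrix_smul_of_col_sum_eq_one {M : Matrix ι ι ℝ} (hM : ∀ j, ∑ i, M i j = 1)
    (v : ι → E) : ∑ i, (M • v) i = ∑ i, v i := by
  simp only [Matrix.Module.smul_apply]
  rw [Finset.sum_comm]
  simp [← Finset.sum_smul, hM]

lemma sum_norm_matrix_smul_le {M : Matrix ι ι ℝ} (hM : M ∈ colStochastic ℝ ι) (v : ι → E) :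
    ∑ i, ‖(M • v) i‖ ≤ ∑ i, ‖v i‖ :=
  calc ∑ i, ‖(M • v) i‖ ≤ ∑ i, ∑ j, M i j * ‖v j‖ := by
        gcongr with i
        refine (norm_sum_le _ _).trans_eq (Finset.sum_congr rfl fun j _ => ?_)
        rw [norm_smul, Real.norm_of_nonneg (hM.1 i j)]
    _ = ∑ j, ‖v j‖ := by
        rw [Finset.sum_comm]
        simp [← Finset.sum_mul, sum_col_of_mem_colStochastic hM]

/-- Subtracting `δ` from every entry does not change `M • v` when `∑ v = 0`. -/
lemma sum_norm_matrix_smul_le_of_sum_eq_zero {M : Matrix ι ι ℝ} (hM : ∀ j, ∑ i, M i j = 1)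
    {δ : ℝ} (hδ : ∀ i j, δ ≤ M i j) {v : ι → E} (hv : ∑ i, v i = 0) :
    ∑ i, ‖(M • v) i‖ ≤ (1 - Fintype.card ι * δ) * ∑ i, ‖v i‖ := by
  have hshift : ∀ i, (M • v) i = ∑ j, (M i j - δ) • v j := fun i => by
    simp [sub_smul, Finset.sum_sub_distrib, ← Finset.smul_sum, hv]
  calc ∑ i, ‖(M • v) i‖ ≤ ∑ i, ∑ j, (M i j - δ) * ‖v j‖ := by
        gcongr with i
        rw [hshift]
        refine (norm_sum_le _ _).trans_eq (Finset.sum_congr rfl fun j _ => ?_)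
        rw [norm_smul, Real.norm_of_nonneg (sub_nonneg.2 (hδ i j))]
    _ = (1 - Fintype.card ι * δ) * ∑ i, ‖v i‖ := by
        rw [Finset.sum_comm, Finset.mul_sum]
        simp [← Finset.sum_mul, Finset.sum_sub_distrib, hM]

lemma exists_contraction_of_pow_pos [Nonempty ι] {P : Matrix ι ι ℝ}
    (hP : P ∈ colStochastic ℝ ι) {k : ℕ} (hk : ∀ i j, 0 < (P ^ k) i j) :
    ∃ lam : ℝ, lam < 1 ∧ ∀ v : ι → E, ∑ i, v i = 0 →
      ∑ i, ‖(P ^ k • v) i‖ ≤ lam * ∑ i, ‖v i‖ := by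
  obtain ⟨δ, hδ, hle⟩ := exists_pos_forall_le_of_finite fun p : ι × ι => hk p.1 p.2
  refine ⟨1 - Fintype.card ι * δ,
    sub_lt_self _ (mul_pos (by exact_mod_cast Fintype.card_pos) hδ),
    fun v hv => sum_norm_matrix_smul_le_of_sum_eq_zero
      (sum_col_of_mem_colStochastic (pow_mem hP k)) (fun i j => hle (i, j)) hv⟩

lemma sum_norm_sub_pow_smul_le {M : Matrix ι ι ℝ} (hM : M ∈ colStochastic ℝ ι)
    {u ζ : ℕ → ι → E} (hu : ∀ t, u (t + 1) = M • u t + ζ t) (t s : ℕ) :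
    ∑ i, ‖(u (t + s) - M ^ s • u t) i‖ ≤ ∑ r ∈ range s, ∑ i, ‖ζ (t + r) i‖ := by
  induction s with
  | zero => simp
  | succ s ih =>
    have hstep : u (t + (s + 1)) - M ^ (s + 1) • u t
        = M • (u (t + s) - M ^ s • u t) + ζ (t + s) := by
      rw [← add_assoc, hu, pow_succ', mul_smul, smul_sub]
      abel
    calc ∑ i, ‖(u (t + (s + 1)) - M ^ (s + 1) • u t) i‖
        ≤ ∑ i, ‖(M • (u (t + s) - M ^ s • u t)) i‖ + ∑ i, ‖ζ (t + s) i‖ := by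
          rw [hstep, ← Finset.sum_add_distrib]
          exact Finset.sum_le_sum fun i _ => norm_add_le _ _
      _ ≤ ∑ r ∈ range (s + 1), ∑ i, ‖ζ (t + r) i‖ := by
          rw [Finset.sum_range_succ]
          gcongr
          exact (sum_norm_matrix_smul_le hM _).trans ih

end ColStochastic

lemma summable_of_shift_le_mul_add {g b : ℕ → ℝ} {k : ℕ} {c : ℝ} (hg : ∀ t, 0 ≤ g t)
    (hc : c < 1) (hb0 : ∀ t, 0 ≤ b t) (hb : Summable b) (h : ∀ t, g (t + k) ≤ c * g t + b t) :
    Summable g := by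
  refine summable_of_sum_range_le hg (c := (∑ t ∈ range k, g t + ∑' t, b t) / (1 - c)) fun N => ?_
  rw [le_div_iff₀ (sub_pos.2 hc)]
  have hshift : ∑ t ∈ range N, g t ≤ ∑ t ∈ range k, g t + ∑ s ∈ range N, g (k + s) := by
    rw [← Finset.sum_range_add]
    exact Finset.sum_le_sum_of_subset_of_nonneg (by gcongr; omega) fun t _ _ => hg t
  have hrec : ∑ s ∈ range N, g (k + s) ≤ c * ∑ t ∈ range N, g t + ∑' t, b t :=
    calc ∑ s ∈ range N, g (k + s) ≤ ∑ s ∈ range N, (c * g s + b s) :=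
          Finset.sum_le_sum fun s _ => add_comm k s ▸ h s
      _ ≤ c * ∑ t ∈ range N, g t + ∑' t, b t := by
          rw [Finset.sum_add_distrib, Finset.mul_sum]
          gcongr
          exact hb.sum_le_tsum _ fun t _ => hb0 t
  linarith

lemma summable_mul_sum_norm_of_perturbed_contraction {ι E : Type*} [Fintype ι] [DecidableEq ι]
    [NormedAddCommGroup E] [NormedSpace ℝ E] {M : Matrix ι ι ℝ} (hM : M ∈ colStochastic ℝ ι)
    {k : ℕ} {lam : ℝ} (hlam1 : lam < 1)
    (hcontr : ∀ v : ι → E, ∑ i, v i = 0 → ∑ i, ‖(M ^ k • v) i‖ ≤ lam * ∑ i, ‖v i‖)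
    {u ζ : ℕ → ι → E} (hu0 : ∀ t, ∑ i, u t i = 0) (hu : ∀ t, u (t + 1) = M • u t + ζ t)
    {α : ℕ → ℝ} (hα0 : ∀ t, 0 ≤ α t) (hαmono : Antitone α) (hαsq : Summable fun t => α t ^ 2)
    {C : ℝ} (hC : 0 ≤ C) (hζ : ∀ t, ∑ i, ‖ζ t i‖ ≤ C * α t) :
    Summable fun t => α t * ∑ i, ‖u t i‖ := by
  set a := fun t => ∑ i, ‖u t i‖
  have ha0 : ∀ t, 0 ≤ a t := fun t => Finset.sum_nonneg fun i _ => norm_nonneg _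
  have hak : ∀ t, a (t + k) ≤ lam * a t + k * C * α t := fun t =>
    calc a (t + k) ≤ ∑ i, ‖(M ^ k • u t) i‖ + ∑ i, ‖(u (t + k) - M ^ k • u t) i‖ := by
          rw [← Finset.sum_add_distrib]
          exact Finset.sum_le_sum fun i _ => norm_le_norm_add_norm_sub' _ _
      _ ≤ lam * a t + ∑ r ∈ range k, C * α t := by
          gcongr ?_ + ?_
          · exact hcontr _ (hu0 t)
          · refine (sum_norm_sub_pow_smul_le hM hu t k).trans (Finset.sum_le_sum fun r _ => ?_)
            exact (hζ _).trans (by gcongr; exact hαmono (Nat.le_add_right t r))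
      _ = lam * a t + k * C * α t := by simp [mul_assoc]
  refine summable_of_shift_le_mul_add (fun t => mul_nonneg (hα0 t) (ha0 t)) hlam1
    (k := k) (b := fun t => k * C * α t ^ 2) (fun t => by positivity) (hαsq.mul_left _) fun t => ?_
  calc α (t + k) * a (t + k) ≤ α t * (lam * a t + k * C * α t) :=
        mul_le_mul (hαmono (Nat.le_add_right t k)) (hak t) (ha0 _) (hα0 t)
    _ = lam * (α t * a t) + k * C * α t ^ 2 := by ring

section PushSum

variable {ι E : Type*} [Fintype ι] [NormedAddCommGroup E] [NormedSpace ℝ E]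

lemma exists_pos_le_pow_mulVec_one [DecidableEq ι] {P : Matrix ι ι ℝ}
    (hP : P ∈ colStochastic ℝ ι) {k : ℕ} (hk : ∀ i j, 0 < (P ^ k) i j)
    (hpos : ∀ t i, 0 < (P ^ t *ᵥ 1) i) :
    ∃ c > 0, ∀ t i, c ≤ (P ^ t *ᵥ 1) i := by
  obtain ⟨δ, hδ, hδle⟩ := exists_pos_forall_le_of_finite fun p : ι × ι => hk p.1 p.2
  obtain ⟨c₀, hc₀, hc₀le⟩ :=
    exists_pos_forall_le_of_finite fun p : Fin k × ι => hpos p.1 p.2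
  refine ⟨min c₀ δ, lt_min hc₀ hδ, fun t i => ?_⟩
  rcases lt_or_ge t k with htk | htk
  · exact (min_le_left _ _).trans (hc₀le (⟨t, htk⟩, i))
  · set z := P ^ (t - k) *ᵥ 1
    have hz0 : 0 ≤ z := nonneg_mulVec_of_mem_colStochastic (pow_mem hP _) fun _ => zero_le_one
    have hz : 1 ≤ ∑ j, z j := by
      rw [sum_mulVec_of_mem_colStochastic (pow_mem hP _)]
      simp only [Pi.one_apply, sum_const, card_univ, nsmul_eq_mul, mul_one]
      have : Nonempty ι := ⟨i⟩
      exact_mod_cast Fintype.card_pos (α := ι)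
    calc min c₀ δ ≤ δ * ∑ j, z j := (min_le_right _ _).trans (le_mul_of_one_le_right hδ.le hz)
      _ ≤ ∑ j, (P ^ k) i j * z j := by
          rw [Finset.mul_sum]
          exact Finset.sum_le_sum fun j _ => mul_le_mul_of_nonneg_right (hδle (i, j)) (hz0 j)
      _ = (P ^ t *ᵥ 1) i := by
          rw [← Nat.add_sub_cancel' htk, pow_add, ← mulVec_mulVec]
          rfl

/-- For `w = y • x` this is `y • (x - m)`, where `m` is the mean of `w`. -/
noncomputable def deviation (y : ι → ℝ) (w : ι → E) : ι → E :=
  w - y • fun _ => (Fintype.card ι : ℝ)⁻¹ • ∑ j, w j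

lemma deviation_add (y : ι → ℝ) (w η : ι → E) :
    deviation y (w + η) = deviation y w + deviation y η := by
  ext i
  simp only [deviation, Pi.add_apply, Pi.sub_apply, Pi.smul_apply', sum_add_distrib, smul_add]
  abel

lemma sum_smul_mean {y : ι → ℝ} (hy : ∑ i, y i = Fintype.card ι) (w : ι → E) :
    ∑ i, y i • (Fintype.card ι : ℝ)⁻¹ • ∑ j, w j = ∑ j, w j := by
  cases isEmpty_or_nonempty ι
  · simp
  · rw [← Finset.sum_smul, hy, smul_smul, mul_inv_cancel₀ (by simp), one_smul]

lemma sum_deviation {y : ι → ℝ} (hy : ∑ i, y i = Fintype.card ι) (w : ι → E) :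
    ∑ i, deviation y w i = 0 := by
  simp [deviation, Finset.sum_sub_distrib, sum_smul_mean hy]

lemma deviation_mulVec_matrix_smul [DecidableEq ι] {M : Matrix ι ι ℝ} (hM : ∀ j, ∑ i, M i j = 1)
    (y : ι → ℝ) (w : ι → E) : deviation (M *ᵥ y) (M • w) = M • deviation y w := by
  ext i
  rw [deviation, deviation, sum_matrix_smul_of_col_sum_eq_one hM]
  simp only [Pi.sub_apply, Pi.smul_apply', Matrix.Module.smul_apply, mulVec, dotProduct, smul_sub,
    Finset.sum_sub_distrib, smul_smul, Finset.sum_mul, ← Finset.sum_smul, mul_assoc]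

lemma sum_norm_deviation_le {y : ι → ℝ} (hy0 : ∀ i, 0 ≤ y i) (hy : ∑ i, y i = Fintype.card ι)
    (η : ι → E) : ∑ i, ‖deviation y η i‖ ≤ 2 * ∑ i, ‖η i‖ := by
  set m := (Fintype.card ι : ℝ)⁻¹ • ∑ j, η j
  have hm : (∑ i, y i) • m = ∑ j, η j := by rw [Finset.sum_smul, sum_smul_mean hy]
  calc ∑ i, ‖deviation y η i‖ ≤ ∑ i, (‖η i‖ + y i * ‖m‖) := by
        refine Finset.sum_le_sum fun i _ => (norm_sub_le _ _).trans_eq ?_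
        rw [Pi.smul_apply', norm_smul, Real.norm_of_nonneg (hy0 i)]
    _ = ∑ i, ‖η i‖ + ‖∑ j, η j‖ := by
        rw [Finset.sum_add_distrib, ← Finset.sum_mul, ← hm, norm_smul (∑ i, y i) m,
          Real.norm_of_nonneg (Finset.sum_nonneg fun i _ => hy0 i)]
    _ ≤ 2 * ∑ i, ‖η i‖ := by
        rw [two_mul]
        exact add_le_add_right (norm_sum_le _ _) _

lemma sum_norm_deviation_smul_le {y : ι → ℝ} (hy0 : ∀ i, 0 < y i)
    (hy : ∑ i, y i = Fintype.card ι) {ε : ι → E} {β : ℝ} (hε : ∀ i, ‖ε i‖ ≤ β / y i) :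
    ∑ i, ‖deviation y (y • ε) i‖ ≤ 2 * Fintype.card ι * β :=
  calc _ ≤ 2 * ∑ i, ‖(y • ε) i‖ := sum_norm_deviation_le (fun i => (hy0 i).le) hy _
    _ ≤ 2 * ∑ _i : ι, β := by
        gcongr with i
        rw [Pi.smul_apply', norm_smul, Real.norm_of_nonneg (hy0 i).le, ← le_div_iff₀' (hy0 i)]
        exact hε i
    _ = 2 * Fintype.card ι * β := by simp [mul_assoc]

lemma diagonal_matrix_smul [DecidableEq ι] (a : ι → ℝ) (v : ι → E) : diagonal a • v = a • v := by
  ext i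
  simp [Matrix.Module.smul_apply, diagonal_apply, ite_smul]

lemma smul_pushSum_update [DecidableEq ι] (P : Matrix ι ι ℝ) {y y' : ι → ℝ}
    (hy' : ∀ i, y' i ≠ 0) (x ε : ι → E) :
    y' • ((diagonal (fun i => (y' i)⁻¹) * P * diagonal y) • x + ε) = P • (y • x) + y' • ε := by
  rw [mul_smul, mul_smul, diagonal_matrix_smul, diagonal_matrix_smul, smul_add]
  congr 1
  ext i
  simp [smul_smul, mul_inv_cancel₀ (hy' i)]

lemma norm_sub_average_le (x : ι → E) (m : E) (i : ι) :
    ‖x i - (Fintype.card ι : ℝ)⁻¹ • ∑ j, x j‖ ≤ 2 * ∑ j, ‖x j - m‖ := by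
  have hcard : (0 : ℝ) < Fintype.card ι := by
    have : Nonempty ι := ⟨i⟩
    exact_mod_cast Fintype.card_pos
  have hsplit : x i - (Fintype.card ι : ℝ)⁻¹ • ∑ j, x j
      = (x i - m) - (Fintype.card ι : ℝ)⁻¹ • ∑ j, (x j - m) := by
    rw [Finset.sum_sub_distrib, sum_const, card_univ, smul_sub, ← Nat.cast_smul_eq_nsmul ℝ,
      smul_smul, inv_mul_cancel₀ hcard.ne', one_smul]
    abel
  have hi := Finset.single_le_sum (fun j _ => norm_nonneg (x j - m)) (mem_univ i)
  calc ‖x i - (Fintype.card ι : ℝ)⁻¹ • ∑ j, x j‖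
      ≤ ‖x i - m‖ + (Fintype.card ι : ℝ)⁻¹ * ∑ j, ‖x j - m‖ := by
        rw [hsplit]
        refine (norm_sub_le _ _).trans (add_le_add_right ?_ _)
        rw [norm_smul, Real.norm_of_nonneg (by positivity)]
        gcongr
        exact norm_sum_le _ _
    _ ≤ 2 * ∑ j, ‖x j - m‖ := by
        have : (Fintype.card ι : ℝ)⁻¹ ≤ 1 := inv_le_one_of_one_le₀ (by exact_mod_cast hcard)
        nlinarith [Finset.sum_nonneg fun j (_ : j ∈ univ) => norm_nonneg (x j - m)]

lemma norm_sub_average_le_sum_norm_deviation {y : ι → ℝ} {c : ℝ} (hc : 0 < c)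
    (hy : ∀ j, c ≤ y j) (x : ι → E) (i : ι) :
    ‖x i - (Fintype.card ι : ℝ)⁻¹ • ∑ j, x j‖ ≤ 2 / c * ∑ j, ‖deviation y (y • x) j‖ := by
  set m := (Fintype.card ι : ℝ)⁻¹ • ∑ j, (y • x) j
  have hdev : ∀ j, c * ‖x j - m‖ ≤ ‖deviation y (y • x) j‖ := fun j => by
    rw [deviation, Pi.sub_apply, Pi.smul_apply', Pi.smul_apply', ← smul_sub, norm_smul,
      Real.norm_of_nonneg (hc.le.trans (hy j))]
    exact mul_le_mul_of_nonneg_right (hy j) (norm_nonneg _)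
  calc ‖x i - (Fintype.card ι : ℝ)⁻¹ • ∑ j, x j‖ ≤ 2 * ∑ j, ‖x j - m‖ := norm_sub_average_le x m i
    _ ≤ 2 / c * ∑ j, ‖deviation y (y • x) j‖ := by
        rw [div_mul_eq_mul_div, le_div_iff₀ hc, mul_assoc, Finset.sum_mul]
        gcongr with j
        linarith [hdev j]

end PushSum

theorem stmt_16 {n d : ℕ} (P : Matrix (Fin n) (Fin n) ℝ)
    (hnonneg : ∀ i j, 0 ≤ P i j)
    (hcol : ∀ j, ∑ i, P i j = 1)
    (hprim : ∃ k : ℕ, ∀ i j, 0 < (P ^ k) i j)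
    (y : ℕ → Fin n → ℝ)
    (hy : ∀ t, y t = (P ^ t) *ᵥ (fun _ => (1 : ℝ)))
    (hypos : ∀ t i, 0 < y t i)
    (Q : ℕ → Matrix (Fin n) (Fin n) ℝ)
    (hQ : ∀ t, Q t = Matrix.diagonal (fun i => (y (t + 1) i)⁻¹) * P * Matrix.diagonal (y t))
    (α : ℕ → ℝ) (hαpos : ∀ t, 0 < α t)
    (hαmono : ∀ s t : ℕ, s ≤ t → α t ≤ α s)
    (hαsq : Summable (fun t => (α t) ^ 2))
    (L : ℝ) (hL : 0 ≤ L)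
    (x : ℕ → Fin n → EuclideanSpace ℝ (Fin d))
    (ε : ℕ → Fin n → EuclideanSpace ℝ (Fin d))
    (hεbound : ∀ t i, ‖ε t i‖ ≤ α t * L / y (t + 1) i)
    (hupdate : ∀ t i, x (t + 1) i = (∑ j, Q t i j • x t j) + ε t i) :
    ∀ i, Summable (fun t => α t * ‖x t i - (n : ℝ)⁻¹ • ∑ j, x t j‖) := by
  intro i
  have : Nonempty (Fin n) := ⟨i⟩
  have hP : P ∈ colStochastic ℝ (Fin n) := mem_colStochastic_iff_sum.2 ⟨hnonneg, hcol⟩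
  obtain ⟨k, hk⟩ := hprim
  obtain ⟨lam, hlam, hcontr⟩ := exists_contraction_of_pow_pos (E := EuclideanSpace ℝ (Fin d)) hP hk
  obtain ⟨c, hc, hyc⟩ := exists_pos_le_pow_mulVec_one hP hk fun t => hy t ▸ hypos t
  have hysum : ∀ t, ∑ j, y t j = Fintype.card (Fin n) := fun t => by
    simp [hy, sum_mulVec_of_mem_colStochastic (pow_mem hP t)]
  have hystep : ∀ t, y (t + 1) = P *ᵥ y t := fun t => by rw [hy, hy, mulVec_mulVec, pow_succ']
  have hu : ∀ t, deviation (y (t + 1)) (y (t + 1) • x (t + 1)) =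
      P • deviation (y t) (y t • x t) + deviation (y (t + 1)) (y (t + 1) • ε t) := fun t => by
    rw [show x (t + 1) = Q t • x t + ε t from funext (hupdate t), hQ,
      smul_pushSum_update P (fun j => (hypos _ j).ne'), deviation_add, hystep,
      deviation_mulVec_matrix_smul hcol]
  have hsum := summable_mul_sum_norm_of_perturbed_contraction hP hlam hcontr
    (u := fun t => deviation (y t) (y t • x t)) (fun t => sum_deviation (hysum t) _) hu
    (fun t => (hαpos t).le) (fun s t h => hαmono s t h) hαsq (C := 2 * n * L) (by positivity)
    fun t => (sum_norm_deviation_smul_le (hypos _) (hysum _) (hεbound t)).trans_eq (by rw [Fintype.card_fin]; ring)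
  refine (hsum.mul_left (2 / c)).of_nonneg_of_le
    (fun t => mul_nonneg (hαpos t).le (norm_nonneg _)) fun t => ?_
  rw [mul_left_comm]
  refine mul_le_mul_of_nonneg_left ?_ (hαpos t).le
  simpa using norm_sub_average_le_sum_norm_deviation hc (fun j => hy t ▸ hyc t j) (x t) i
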